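/- For every natural number γ, the rewrite rule →_γ on syntax trees on G_γ is terminating (there is no infinite sequence of one-step rewritings) and confluent; its normal forms (the trees admitting no one-step rewriting) are exactly the hook syntax trees, and the unique normal form of any syntax tree t is hook_γ(word_γ(t)). (This is the combinatorial content of the statement that the hook syntax trees form a Poincaré–Birkhoff–Witt basis of the operad Dias_γ.) -/

import Mathlib

/-- Syntax trees on `G_γ = {⊣_a, ⊢_a : a ∈ {1, …, γ}}`: complete planar binary
trees whose internal nodes carry a label `⊣_a` (`dashv a`) or `⊢_a` (`vdash a`),
the index `a : Fin γ` encoding the letter `a + 1 ∈ {1, …, γ}`. -/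
inductive STree (γ : ℕ) : Type
  | leaf : STree γ
  | dashv (a : Fin γ) (l r : STree γ) : STree γ
  | vdash (a : Fin γ) (l r : STree γ) : STree γ

/-- `hA a` replaces every letter smaller than `a` by `a`. -/
def hA (a : ℕ) (w : List ℕ) : List ℕ := w.map (fun b => max a b)

/-- The word associated with a syntax tree. -/
def wordOf {γ : ℕ} : STree γ → List ℕ
  | .leaf => [0]
  | .dashv a l r => wordOf l ++ hA (a.val + 1) (wordOf r)
  | .vdash a l r => hA (a.val + 1) (wordOf l) ++ wordOf r

/-- Number of leaves (the arity) of a syntax tree. -/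
def nleaves {γ : ℕ} : STree γ → ℕ
  | .leaf => 1
  | .dashv _ l r => nleaves l + nleaves r
  | .vdash _ l r => nleaves l + nleaves r

/-- The right comb with internal nodes labeled, from top to bottom, by
`⊢_{u_1}, …, ⊢_{u_{|u|}}`, each left child being a leaf. -/
def rightComb {γ : ℕ} : List (Fin γ) → STree γ
  | [] => .leaf
  | a :: u => .vdash a .leaf (rightComb u)

/-- The hook syntax tree associated with the word `u0v`: a left comb labeled
from bottom to top by `⊣_{v_1}, …, ⊣_{v_{|v|}}` (right children being leaves)
grafted on top of the right comb associated to `u`. -/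
def hook {γ : ℕ} (u v : List (Fin γ)) : STree γ :=
  v.foldl (fun t b => .dashv b t .leaf) (rightComb u)

/-- Root patterns of the rewrite rule `→_γ`. -/
inductive RootRW (γ : ℕ) : STree γ → STree γ → Prop
  | r1 (a a' : Fin γ) (x y z : STree γ) :
      RootRW γ (.vdash a' x (.dashv a y z)) (.dashv a (.vdash a' x y) z)
  | r2 (a b : Fin γ) (h : a < b) (x y z : STree γ) :
      RootRW γ (.dashv a x (.vdash b y z)) (.dashv a (.dashv b x y) z)
  | r3 (a b : Fin γ) (h : a < b) (x y z : STree γ) :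
      RootRW γ (.vdash a (.dashv b x y) z) (.vdash a x (.vdash b y z))
  | r4 (a b : Fin γ) (h : a < b) (x y z : STree γ) :
      RootRW γ (.dashv a x (.dashv b y z)) (.dashv b (.dashv a x y) z)
  | r5 (a b : Fin γ) (h : a < b) (x y z : STree γ) :
      RootRW γ (.vdash a (.vdash b x y) z) (.vdash b x (.vdash a y z))
  | r6 (c d : Fin γ) (h : c ≤ d) (x y z : STree γ) :
      RootRW γ (.dashv d x (.dashv c y z)) (.dashv d (.dashv d x y) z)
  | r7 (c d : Fin γ) (h : c ≤ d) (x y z : STree γ) :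
      RootRW γ (.dashv d x (.vdash c y z)) (.dashv d (.dashv d x y) z)
  | r8 (c d : Fin γ) (h : c ≤ d) (x y z : STree γ) :
      RootRW γ (.vdash d (.dashv c x y) z) (.vdash d x (.vdash d y z))
  | r9 (c d : Fin γ) (h : c ≤ d) (x y z : STree γ) :
      RootRW γ (.vdash d (.vdash c x y) z) (.vdash d x (.vdash d y z))

/-- One-step rewriting by `→_γ`: a root pattern applied anywhere inside a tree. -/
inductive Step (γ : ℕ) : STree γ → STree γ → Prop
  | here {s t : STree γ} : RootRW γ s t → Step γ s t
  | dashvL (a : Fin γ) {s s' : STree γ} (r : STree γ) :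
      Step γ s s' → Step γ (.dashv a s r) (.dashv a s' r)
  | dashvR (a : Fin γ) (l : STree γ) {s s' : STree γ} :
      Step γ s s' → Step γ (.dashv a l s) (.dashv a l s')
  | vdashL (a : Fin γ) {s s' : STree γ} (r : STree γ) :
      Step γ s s' → Step γ (.vdash a s r) (.vdash a s' r)
  | vdashR (a : Fin γ) (l : STree γ) {s s' : STree γ} :
      Step γ s s' → Step γ (.vdash a l s) (.vdash a l s')


/-! ### Auxiliary material -/

/-- Number of `dashv` internal nodes. -/
def ndash {γ : ℕ} : STree γ → ℕ
  | .leaf => 0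
  | .dashv _ l r => ndash l + ndash r + 1
  | .vdash _ l r => ndash l + ndash r

/-- First termination measure. -/
def phiM {γ : ℕ} : STree γ → ℕ
  | .leaf => 0
  | .dashv _ l r => phiM l + phiM r + nleaves r
  | .vdash _ l r => phiM l + phiM r + nleaves l

/-- Second termination measure: pairs (vdash ancestor, dashv descendant). -/
def psiM {γ : ℕ} : STree γ → ℕ
  | .leaf => 0
  | .dashv _ l r => psiM l + psiM r
  | .vdash _ l r => psiM l + psiM r + ndash l + ndash r

lemma nleaves_pos {γ : ℕ} (t : STree γ) : 1 ≤ nleaves t := by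
  induction t <;> simp [nleaves] <;> omega

lemma nleaves_root {γ : ℕ} {s t : STree γ} (h : RootRW γ s t) :
    nleaves t = nleaves s := by
  cases h <;> simp [nleaves] <;> omega

lemma nleaves_step {γ : ℕ} {s t : STree γ} (h : Step γ s t) :
    nleaves t = nleaves s := by
  induction h with
  | here h => exact nleaves_root h
  | dashvL a r h ih => simp [nleaves, ih]
  | dashvR a l h ih => simp [nleaves, ih]
  | vdashL a r h ih => simp [nleaves, ih]
  | vdashR a l h ih => simp [nleaves, ih]

lemma root_dec {γ : ℕ} {s t : STree γ} (h : RootRW γ s t) :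
    phiM t < phiM s ∨ (phiM t = phiM s ∧ ndash t = ndash s ∧ psiM t < psiM s) := by
  cases h <;>
  · first
    | (rename_i a a' x y z
       right
       refine ⟨by simp [phiM, nleaves]; omega, by simp [ndash]; omega, ?_⟩
       simp [psiM, ndash]; omega)
    | (rename_i x y z
       left
       have hx := nleaves_pos x
       have hy := nleaves_pos y
       have hz := nleaves_pos z
       simp [phiM, nleaves]; omega)

lemma step_dec {γ : ℕ} {s t : STree γ} (h : Step γ s t) :
    phiM t < phiM s ∨ (phiM t = phiM s ∧ ndash t = ndash s ∧ psiM t < psiM s) := by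
  induction h with
  | here h => exact root_dec h
  | dashvL a r h ih =>
      have hn := nleaves_step h
      rcases ih with h1 | ⟨h1, h2, h3⟩ <;> simp [phiM, psiM, ndash, hn] <;> omega
  | dashvR a l h ih =>
      have hn := nleaves_step h
      rcases ih with h1 | ⟨h1, h2, h3⟩ <;> simp [phiM, psiM, ndash, hn] <;> omega
  | vdashL a r h ih =>
      have hn := nleaves_step h
      rcases ih with h1 | ⟨h1, h2, h3⟩ <;> simp [phiM, psiM, ndash, hn] <;> omega
  | vdashR a l h ih =>
      have hn := nleaves_step h
      rcases ih with h1 | ⟨h1, h2, h3⟩ <;> simp [phiM, psiM, ndash, hn] <;> omega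

lemma ndash_lt {γ : ℕ} (t : STree γ) : ndash t < nleaves t := by
  induction t <;> simp [ndash, nleaves] <;> omega

lemma psi_lt {γ : ℕ} (t : STree γ) : psiM t < (nleaves t) ^ 2 := by
  induction t with
  | leaf => simp [psiM, nleaves]
  | dashv a l r ihl ihr =>
      have hl := nleaves_pos l
      have hr := nleaves_pos r
      simp only [psiM, nleaves]
      nlinarith
  | vdash a l r ihl ihr =>
      have hl := nleaves_pos l
      have hr := nleaves_pos r
      have dl := ndash_lt l
      have dr := ndash_lt r
      simp only [psiM, nleaves]
      nlinarith

/-- Combined natural-number termination measure. -/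
def muM {γ : ℕ} (t : STree γ) : ℕ := phiM t * (nleaves t) ^ 2 + psiM t

lemma step_mu {γ : ℕ} {s t : STree γ} (h : Step γ s t) : muM t < muM s := by
  have hn := nleaves_step h
  have hp := psi_lt t
  rw [hn] at hp
  unfold muM
  rw [hn]
  rcases step_dec h with h1 | ⟨h1, h2, h3⟩
  · nlinarith [psi_lt s]
  · rw [h1]; omega

lemma no_inf {γ : ℕ} : ¬ ∃ f : ℕ → STree γ, ∀ n : ℕ, Step γ (f n) (f (n + 1)) := by
  rintro ⟨f, hf⟩
  have key : ∀ n, muM (f n) + n ≤ muM (f 0) := by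
    intro n
    induction n with
    | zero => omega
    | succ n ih => have := step_mu (hf n); omega
  have := key (muM (f 0) + 1)
  omega

/-! ### Invariance of the word -/

lemma hA_append (a : ℕ) (w1 w2 : List ℕ) : hA a (w1 ++ w2) = hA a w1 ++ hA a w2 :=
  List.map_append

lemma hA_hA (a b : ℕ) (w : List ℕ) : hA a (hA b w) = hA (max a b) w := by
  simp only [hA, List.map_map]
  apply List.map_congr_left
  intro x _
  simp only [Function.comp_apply]
  omega

lemma wordOf_root {γ : ℕ} {s t : STree γ} (h : RootRW γ s t) :
    wordOf t = wordOf s := by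
  cases h with
  | r1 a a' x y z => simp [wordOf, hA_append, List.append_assoc]
  | r2 a b h x y z =>
      have hm : max (a.val + 1) (b.val + 1) = b.val + 1 := by
        have := Fin.lt_def.mp h; omega
      simp [wordOf, hA_append, hA_hA, hm, List.append_assoc]
  | r3 a b h x y z =>
      have hm : max (a.val + 1) (b.val + 1) = b.val + 1 := by
        have := Fin.lt_def.mp h; omega
      simp [wordOf, hA_append, hA_hA, hm, List.append_assoc]
  | r4 a b h x y z =>
      have hm : max (a.val + 1) (b.val + 1) = b.val + 1 := by
        have := Fin.lt_def.mp h; omega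
      simp [wordOf, hA_append, hA_hA, hm, List.append_assoc]
  | r5 a b h x y z =>
      have hm : max (a.val + 1) (b.val + 1) = b.val + 1 := by
        have := Fin.lt_def.mp h; omega
      simp [wordOf, hA_append, hA_hA, hm, List.append_assoc]
  | r6 c d h x y z =>
      have hm : max (d.val + 1) (c.val + 1) = d.val + 1 := by
        have := Fin.le_def.mp h; omega
      simp [wordOf, hA_append, hA_hA, hm, List.append_assoc]
  | r7 c d h x y z =>
      have hm : max (d.val + 1) (c.val + 1) = d.val + 1 := by
        have := Fin.le_def.mp h; omega
      simp [wordOf, hA_append, hA_hA, hm, List.append_assoc]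
  | r8 c d h x y z =>
      have hm : max (d.val + 1) (c.val + 1) = d.val + 1 := by
        have := Fin.le_def.mp h; omega
      simp [wordOf, hA_append, hA_hA, hm, List.append_assoc]
  | r9 c d h x y z =>
      have hm : max (d.val + 1) (c.val + 1) = d.val + 1 := by
        have := Fin.le_def.mp h; omega
      simp [wordOf, hA_append, hA_hA, hm, List.append_assoc]

lemma wordOf_step {γ : ℕ} {s t : STree γ} (h : Step γ s t) :
    wordOf t = wordOf s := by
  induction h with
  | here h => exact wordOf_root h
  | dashvL a r h ih => simp [wordOf, ih]
  | dashvR a l h ih => simp [wordOf, ih]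
  | vdashL a r h ih => simp [wordOf, ih]
  | vdashR a l h ih => simp [wordOf, ih]

lemma wordOf_rtg {γ : ℕ} {s t : STree γ} (h : Relation.ReflTransGen (Step γ) s t) :
    wordOf t = wordOf s := by
  induction h with
  | refl => rfl
  | tail _ h ih => rw [wordOf_step h, ih]

/-! ### Normal forms -/

lemma hook_nil {γ : ℕ} (u : List (Fin γ)) : hook u [] = rightComb u := rfl

lemma hook_concat {γ : ℕ} (u v : List (Fin γ)) (b : Fin γ) :
    hook u (v ++ [b]) = STree.dashv b (hook u v) STree.leaf := by
  simp [hook, List.foldl_append]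

lemma no_step_leaf {γ : ℕ} (s : STree γ) : ¬ Step γ STree.leaf s := by
  intro h
  cases h with
  | here h => cases h

lemma rightComb_ne_dashv {γ : ℕ} (u : List (Fin γ)) (a : Fin γ) (l r : STree γ) :
    rightComb u ≠ STree.dashv a l r := by
  cases u <;> simp [rightComb]

lemma vdash_leaf_nf {γ : ℕ} (a : Fin γ) (r : STree γ)
    (h1 : ∀ s, ¬ Step γ r s) (h2 : ∀ b l rr, r ≠ STree.dashv b l rr) :
    ∀ s, ¬ Step γ (STree.vdash a STree.leaf r) s := by
  intro s hs
  cases hs with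
  | here h =>
      cases h with
      | r1 a a' x y z => exact h2 _ _ _ rfl
  | vdashL a r h => exact no_step_leaf _ h
  | vdashR a l h => exact h1 _ h

lemma dashv_leaf_nf {γ : ℕ} (a : Fin γ) (l : STree γ)
    (h1 : ∀ s, ¬ Step γ l s) :
    ∀ s, ¬ Step γ (STree.dashv a l STree.leaf) s := by
  intro s hs
  cases hs with
  | here h => cases h
  | dashvL a r h => exact h1 _ h
  | dashvR a l h => exact no_step_leaf _ h

lemma rightComb_nf {γ : ℕ} (u : List (Fin γ)) :
    ∀ s, ¬ Step γ (rightComb u) s := by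
  induction u with
  | nil => exact no_step_leaf
  | cons a u ih => exact vdash_leaf_nf a (rightComb u) ih (rightComb_ne_dashv u)

lemma hook_nf {γ : ℕ} (u v : List (Fin γ)) :
    ∀ s, ¬ Step γ (hook u v) s := by
  induction v using List.reverseRecOn with
  | nil => exact rightComb_nf u
  | append_singleton v b ih =>
      rw [hook_concat]
      exact dashv_leaf_nf b (hook u v) ih

lemma exists_step_or_hook {γ : ℕ} (t : STree γ) :
    (∃ s, Step γ t s) ∨ ∃ u v : List (Fin γ), t = hook u v := by
  induction t with
  | leaf => exact Or.inr ⟨[], [], rfl⟩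
  | dashv a l r ihl ihr =>
      rcases ihl with ⟨s, hs⟩ | ⟨u, v, rfl⟩
      · exact Or.inl ⟨_, Step.dashvL a r hs⟩
      rcases ihr with ⟨s, hs⟩ | ⟨u', v', hr⟩
      · exact Or.inl ⟨_, Step.dashvR a _ hs⟩
      cases r with
      | leaf => exact Or.inr ⟨u, v ++ [a], (hook_concat u v a).symm⟩
      | dashv b y z =>
          rcases lt_or_ge a b with hab | hab
          · exact Or.inl ⟨_, Step.here (RootRW.r4 a b hab _ y z)⟩
          · exact Or.inl ⟨_, Step.here (RootRW.r6 b a hab _ y z)⟩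
      | vdash b y z =>
          rcases lt_or_ge a b with hab | hab
          · exact Or.inl ⟨_, Step.here (RootRW.r2 a b hab _ y z)⟩
          · exact Or.inl ⟨_, Step.here (RootRW.r7 b a hab _ y z)⟩
  | vdash a l r ihl ihr =>
      rcases ihr with ⟨s, hs⟩ | ⟨u, v, rfl⟩
      · exact Or.inl ⟨_, Step.vdashR a l hs⟩
      cases l with
      | leaf =>
          rcases List.eq_nil_or_concat v with rfl | ⟨v', b, rfl⟩
          · exact Or.inr ⟨a :: u, [], rfl⟩
          · rw [List.concat_eq_append, hook_concat]
            exact Or.inl ⟨_, Step.here (RootRW.r1 b a _ (hook u v') _)⟩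
      | dashv b y z =>
          rcases lt_or_ge a b with hab | hab
          · exact Or.inl ⟨_, Step.here (RootRW.r3 a b hab y z _)⟩
          · exact Or.inl ⟨_, Step.here (RootRW.r8 b a hab y z _)⟩
      | vdash b y z =>
          rcases lt_or_ge a b with hab | hab
          · exact Or.inl ⟨_, Step.here (RootRW.r5 a b hab y z _)⟩
          · exact Or.inl ⟨_, Step.here (RootRW.r9 b a hab y z _)⟩

lemma normalizeT {γ : ℕ} (t : STree γ) :
    ∃ u v : List (Fin γ), Relation.ReflTransGen (Step γ) t (hook u v) := by
  have H : ∀ n (t : STree γ), muM t ≤ n →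
      ∃ u v : List (Fin γ), Relation.ReflTransGen (Step γ) t (hook u v) := by
    intro n
    induction n with
    | zero =>
        intro t ht
        rcases exists_step_or_hook t with ⟨s, hs⟩ | ⟨u, v, rfl⟩
        · exact absurd (step_mu hs) (by omega)
        · exact ⟨u, v, Relation.ReflTransGen.refl⟩
    | succ n ih =>
        intro t ht
        rcases exists_step_or_hook t with ⟨s, hs⟩ | ⟨u, v, rfl⟩
        · obtain ⟨u, v, hr⟩ := ih s (by have := step_mu hs; omega)
          exact ⟨u, v, Relation.ReflTransGen.head hs hr⟩
        · exact ⟨u, v, Relation.ReflTransGen.refl⟩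
  exact H (muM t) t le_rfl

/-! ### Words of hooks and injectivity -/

lemma wordOf_rightComb {γ : ℕ} (u : List (Fin γ)) :
    wordOf (rightComb u) = u.map (fun a => a.val + 1) ++ [0] := by
  induction u with
  | nil => simp [rightComb, wordOf]
  | cons a u ih => simp [rightComb, wordOf, hA, ih]

lemma wordOf_hook {γ : ℕ} (u v : List (Fin γ)) :
    wordOf (hook u v) =
      u.map (fun a => a.val + 1) ++ 0 :: v.map (fun a => a.val + 1) := by
  induction v using List.reverseRecOn with
  | nil => simpa [hook_nil] using wordOf_rightComb u
  | append_singleton v b ih =>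
      rw [hook_concat]
      simp [wordOf, hA, ih]

lemma split0 : ∀ (l1 l2 r1 r2 : List ℕ), (0 : ℕ) ∉ l1 → (0 : ℕ) ∉ l2 →
    l1 ++ 0 :: r1 = l2 ++ 0 :: r2 → l1 = l2 ∧ r1 = r2 := by
  intro l1
  induction l1 with
  | nil =>
      intro l2 r1 r2 _ h2 he
      cases l2 with
      | nil => simpa using he
      | cons b l2 =>
          simp only [List.nil_append, List.cons_append, List.cons.injEq] at he
          simp only [List.mem_cons, not_or] at h2
          exact absurd he.1 h2.1
  | cons a l1 ih =>
      intro l2 r1 r2 h1 h2 he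
      cases l2 with
      | nil =>
          simp only [List.cons_append, List.nil_append, List.cons.injEq] at he
          simp only [List.mem_cons, not_or] at h1
          exact absurd he.1.symm h1.1
      | cons b l2 =>
          simp only [List.cons_append, List.cons.injEq] at he
          simp only [List.mem_cons, not_or] at h1 h2
          obtain ⟨hl, hr⟩ := ih l2 r1 r2 h1.2 h2.2 he.2
          exact ⟨by rw [he.1, hl], hr⟩

lemma hook_eq_of_word {γ : ℕ} {u v u' v' : List (Fin γ)}
    (h : wordOf (hook u v) = wordOf (hook u' v')) : hook u v = hook u' v' := by
  rw [wordOf_hook, wordOf_hook] at h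
  have hinj : Function.Injective (fun a : Fin γ => a.val + 1) := by
    intro a b hab
    have h' : a.val + 1 = b.val + 1 := hab
    exact Fin.val_injective (Nat.succ_injective h')
  have h0 : (0 : ℕ) ∉ u.map (fun a => a.val + 1) := by simp
  have h0' : (0 : ℕ) ∉ u'.map (fun a => a.val + 1) := by simp
  obtain ⟨h1, h2⟩ := split0 _ _ _ _ h0 h0' h
  have hu : u = u' := List.map_injective_iff.mpr hinj h1
  have hv : v = v' := List.map_injective_iff.mpr hinj h2
  rw [hu, hv]

/-- The rewrite rule `→_γ` is terminating and confluent, its normal forms are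
exactly the hook syntax trees, and the unique normal form of a syntax tree `t`
is `hook_γ(word_γ(t))`. -/
theorem stmt4 (γ : ℕ) :
    (¬ ∃ f : ℕ → STree γ, ∀ n : ℕ, Step γ (f n) (f (n + 1))) ∧
    (∀ a b c : STree γ, Relation.ReflTransGen (Step γ) a b →
      Relation.ReflTransGen (Step γ) a c →
      ∃ d : STree γ, Relation.ReflTransGen (Step γ) b d ∧
        Relation.ReflTransGen (Step γ) c d) ∧
    (∀ t : STree γ, (∀ s : STree γ, ¬ Step γ t s) ↔
      ∃ u v : List (Fin γ), t = hook u v) ∧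
    (∀ t : STree γ, ∃ u v : List (Fin γ),
      Relation.ReflTransGen (Step γ) t (hook u v) ∧
      wordOf (hook u v) = wordOf t ∧
      ∀ u' v' : List (Fin γ), Relation.ReflTransGen (Step γ) t (hook u' v') →
        hook u' v' = hook u v) := by
  refine ⟨no_inf, ?_, ?_, ?_⟩
  · intro a b c hab hac
    obtain ⟨u, v, hb⟩ := normalizeT b
    obtain ⟨u', v', hc⟩ := normalizeT c
    have hw : wordOf (hook u v) = wordOf (hook u' v') := by
      rw [wordOf_rtg hb, wordOf_rtg hc, wordOf_rtg hab, wordOf_rtg hac]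
    have := hook_eq_of_word hw
    exact ⟨hook u v, hb, this ▸ hc⟩
  · intro t
    constructor
    · intro hnf
      rcases exists_step_or_hook t with ⟨s, hs⟩ | h
      · exact absurd hs (hnf s)
      · exact h
    · rintro ⟨u, v, rfl⟩
      exact hook_nf u v
  · intro t
    obtain ⟨u, v, ht⟩ := normalizeT t
    refine ⟨u, v, ht, wordOf_rtg ht, ?_⟩
    intro u' v' ht'
    exact hook_eq_of_word (by rw [wordOf_rtg ht', wordOf_rtg ht])
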